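/- Let g ∈ K⟦t⟧, let m ≥ 0, and let v ∈ K⟦t⟧ with constant term 0. If v' - g·h(v) ≡ 0 (mod t^m), then v ≡ Y(g) (mod t^{m+1}). -/

import Mathlib

/-!
Write congruence modulo `t ^ n` as divisibility by `X ^ n`. The coefficient of `t ^ n` in
`g * h(v)` depends only on `v` modulo `t ^ (n + 1)`, while that of `t ^ n` in `v'` is `n + 1` times
the coefficient of `t ^ (n + 1)` in `v`. So as long as `n ≤ m`, `v ≡ y (mod t ^ n)` forces
`v' ≡ y' (mod t ^ n)`, hence, as `v` and `y` vanish at `0` and `K` has characteristic zero,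
`v ≡ y (mod t ^ (n + 1))`.
-/

open PowerSeries

/-- Composition `h(u)` of formal power series, intended for `u` with zero constant term. -/
noncomputable def pcomp {R : Type*} [CommSemiring R] (h u : R⟦X⟧) : R⟦X⟧ :=
  PowerSeries.mk fun n => ∑ i ∈ Finset.range (n + 1), coeff i h * coeff n (u ^ i)

/-- Formal integral: the unique `F` with `F' = f` and `F(0) = 0`. -/
noncomputable def pint {K : Type*} [Field K] (f : K⟦X⟧) : K⟦X⟧ :=
  PowerSeries.mk fun n => if n = 0 then 0 else coeff (n - 1) f / (n : K)

lemma X_pow_dvd_pcomp_sub_pcomp {R : Type*} [CommRing R] (h : R⟦X⟧) {v w : R⟦X⟧} {n : ℕ}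
    (hvw : X ^ n ∣ v - w) : X ^ n ∣ pcomp h v - pcomp h w := by
  rw [X_pow_dvd_iff] at hvw ⊢
  intro k hk
  have hpow (i : ℕ) : coeff k (v ^ i) = coeff k (w ^ i) := by
    rw [← sub_eq_zero, ← map_sub]
    exact X_pow_dvd_iff.mp ((X_pow_dvd_iff.mpr hvw).trans (sub_dvd_pow_sub_pow v w i)) k hk
  simp only [pcomp, map_sub, coeff_mk, hpow, sub_self]

lemma X_pow_succ_dvd_of_X_pow_dvd_derivative {R : Type*} [CommSemiring R] [IsAddTorsionFree R]
    {f : R⟦X⟧} {n : ℕ} (hf : constantCoeff f = 0) (hdf : X ^ n ∣ d⁄dX R f) :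
    X ^ (n + 1) ∣ f := by
  rw [X_pow_dvd_iff] at hdf ⊢
  rintro (_ | k) hk
  · rwa [coeff_zero_eq_constantCoeff]
  · have hk' := hdf k (by omega)
    rw [coeff_derivative, ← Nat.cast_succ, mul_comm, ← nsmul_eq_mul] at hk'
    exact (smul_eq_zero.mp hk').resolve_left k.succ_ne_zero

theorem stmt4 {K : Type*} [Field K] [CharZero K] (g h v y : K⟦X⟧)
    (hv : constantCoeff v = 0)
    (hy0 : constantCoeff y = 0) (hy : derivativeFun y = g * pcomp h y)
    (m : ℕ)
    (hres : ∀ i < m, coeff i (derivativeFun v - g * pcomp h v) = 0) :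
    ∀ i < m + 1, coeff i v = coeff i y := by
  have hres : X ^ m ∣ d⁄dX K v - g * pcomp h v := X_pow_dvd_iff.mpr hres
  have hy : d⁄dX K y = g * pcomp h y := hy
  have step (n : ℕ) (hn : n ≤ m) (hvy : X ^ n ∣ v - y) : X ^ (n + 1) ∣ v - y := by
    refine X_pow_succ_dvd_of_X_pow_dvd_derivative (by simp [hv, hy0]) ?_
    have hsplit : d⁄dX K (v - y) =
        (d⁄dX K v - g * pcomp h v) + g * (pcomp h v - pcomp h y) := by
      rw [map_sub, hy]; ring
    rw [hsplit]
    exact dvd_add ((pow_dvd_pow X hn).trans hres)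
      (dvd_mul_of_dvd_right (X_pow_dvd_pcomp_sub_pcomp h hvy) g)
  have hcongr : ∀ n ≤ m + 1, X ^ n ∣ v - y := by
    intro n hn
    induction n with
    | zero => simp
    | succ n ih => exact step n (by omega) (ih (by omega))
  intro i hi
  rw [← sub_eq_zero, ← map_sub]
  exact X_pow_dvd_iff.mp (hcongr (m + 1) le_rfl) i hi
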